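/- In the setting of the context (in particular d ≥ 3, G is d-claw free, A is a maximal independent set, A* is a maximum-weight independent set, and every u ∈ A'* satisfies w(N(u,A)) < 3·w(u) since A'* is disjoint from P): if there exists a vertex u ∈ A'* with N(u,A') = ∅, then there exists a local improvement of w²(A). -/

import Mathlib

open Finset

open scoped Classical

variable {V : Type*}

noncomputable section

/-- Neighborhood of `U` in `W`: vertices of `W` that lie in `U` or are adjacent to some
vertex of `U`. -/
def nbhd (G : SimpleGraph V) (U W : Finset V) : Finset V :=
  W.filter (fun x => x ∈ U ∨ ∃ u ∈ U, G.Adj u x)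

/-- Neighborhood of a single vertex `u` in `W`. -/
def nbhd1 (G : SimpleGraph V) (u : V) (W : Finset V) : Finset V :=
  nbhd G {u} W

/-- Total weight of a finite set of vertices. -/
def wsum (w : V → ℝ) (U : Finset V) : ℝ := ∑ x ∈ U, w x

/-- Total squared weight of a finite set of vertices. -/
def wsq (w : V → ℝ) (U : Finset V) : ℝ := ∑ x ∈ U, (w x) ^ 2

/-- A finite set of vertices is independent. -/
def IsIndep (G : SimpleGraph V) (S : Finset V) : Prop :=
  ∀ a ∈ S, ∀ b ∈ S, a ≠ b → ¬ G.Adj a b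

/-- `G` is `d`-claw free: every independent subset of the neighborhood of any vertex has
size at most `d - 1`. -/
def ClawFree (G : SimpleGraph V) (d : ℕ) : Prop :=
  ∀ v : V, ∀ S : Finset V, (∀ x ∈ S, G.Adj v x) → IsIndep G S → S.card ≤ d - 1

/-- `X` is a local improvement of `w²(A)`. -/
def LocalImprovement (G : SimpleGraph V) (d : ℕ) (w : V → ℝ) (A X : Finset V) : Prop :=
  IsIndep G X ∧ X.card ≤ (d - 1) ^ 2 + (d - 1) ∧ wsq w (nbhd G X A) < wsq w X

/-- No claw improves `w²(A)`: `w²(T) ≤ w²(N(T,A))` for every independent set `T` that is a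
singleton or whose vertices are all adjacent to a common vertex. -/
def NoClawImproves (G : SimpleGraph V) (w : V → ℝ) (A : Finset V) : Prop :=
  ∀ T : Finset V, IsIndep G T → (T.card = 1 ∨ ∃ v : V, ∀ x ∈ T, G.Adj v x) →
    wsq w T ≤ wsq w (nbhd G T A)

/-- The charge map, relative to a choice `n` of heaviest neighbors. -/
def charge (G : SimpleGraph V) (w : V → ℝ) (A : Finset V) (n : V → V) (u v : V) : ℝ :=
  if v = n u then w u - wsum w (nbhd1 G u A) / 2 else 0

/-- `u ∈ T_v` is single (with `√ε = 1/2304`). -/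
def IsSingle (G : SimpleGraph V) (w : V → ℝ) (A : Finset V) (u v : V) : Prop :=
  (1 - 1 / 2304 : ℝ) ≤ w u / w v ∧ w u / w v ≤ 1 + 1 / 2304 ∧
  wsum w (nbhd1 G u A) ≤ (1 + 1 / 2304) * w v

/-- `u ∈ T_v` is double (with `√ε = 1/2304`). -/
def IsDouble (G : SimpleGraph V) (w : V → ℝ) (A : Finset V) (u v : V) : Prop :=
  2 ≤ (nbhd1 G u A).card ∧
  ∃ v₂ ∈ (nbhd1 G u A).erase v, (∀ x ∈ (nbhd1 G u A).erase v, w x ≤ w v₂) ∧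
    (1 - 1 / 2304 : ℝ) ≤ w u / w v ∧ w u / w v ≤ 1 + 1 / 2304 ∧
    (1 - 1 / 2304 : ℝ) ≤ w v₂ / w v ∧ w v₂ / w v ≤ 1 ∧
    (2 - 1 / 2304) * w v ≤ wsum w (nbhd1 G u A) ∧ wsum w (nbhd1 G u A) < 2 * w u

/-- The contribution map. -/
def contr (G : SimpleGraph V) (w : V → ℝ) (A : Finset V) (u v : V) : ℝ :=
  if v ∈ nbhd1 G u A then max 0 (((w u) ^ 2 - wsq w ((nbhd1 G u A).erase v)) / w v) else 0

/-!
Every neighbour `v` of `u` in `A` lies in `B`, so it has a single partner `t v ∈ A*` whose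
heaviest neighbour is `v`. The set `X = {u} ∪ t(N(u,A))` is independent with at most `d + 1`
vertices, `w²(N(X,A)) ≤ (1+√ε)·w²(N(u,A))` because `N(X,A)` is covered by the neighbourhoods of
the partners, and `w²(X) ≥ w(u)² + (1-√ε)²·w²(N(u,A))`. As `w²(N(u,A)) ≤ w(N(u,A))² < 9·w(u)²`,
the gain is at least `w(u)² - 27√ε·w(u)² > 0`.
-/

section

variable {G : SimpleGraph V} {w : V → ℝ}

lemma mem_nbhd1 {u x : V} {W : Finset V} : x ∈ nbhd1 G u W ↔ x ∈ W ∧ (x = u ∨ G.Adj u x) := by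
  simp [nbhd1, nbhd]

lemma nbhd_eq_biUnion (X W : Finset V) : nbhd G X W = X.biUnion (nbhd1 G · W) := by
  ext x
  simp only [nbhd, nbhd1, mem_filter, mem_biUnion, mem_singleton]
  grind

lemma IsIndep.subset {S T : Finset V} (hT : IsIndep G T) (h : S ⊆ T) : IsIndep G S :=
  fun a ha b hb => hT a (h ha) b (h hb)

lemma eq_of_charge_pos {A : Finset V} {n : V → V} {s v : V} (h : 0 < charge G w A n s v) :
    v = n s := by
  by_contra hne
  rw [charge, if_neg hne] at h
  exact h.false

lemma card_erase_nbhd1_le {d : ℕ} (hG : ClawFree G d) {A : Finset V} (hA : IsIndep G A) (u : V) :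
    ((nbhd1 G u A).erase u).card ≤ d - 1 := by
  refine hG u _ (fun x hx => ?_) (fun a ha b hb => hA a ?_ b ?_)
  · obtain ⟨hxu, hx⟩ := mem_erase.mp hx
    exact (mem_nbhd1.mp hx).2.resolve_left hxu
  · exact (mem_nbhd1.mp (mem_of_mem_erase ha)).1
  · exact (mem_nbhd1.mp (mem_of_mem_erase hb)).1

lemma wsq_mono (w : V → ℝ) {S T : Finset V} (h : S ⊆ T) : wsq w S ≤ wsq w T :=
  sum_le_sum_of_subset_of_nonneg h fun _ _ _ => sq_nonneg _

lemma wsq_union_le (w : V → ℝ) (S T : Finset V) : wsq w (S ∪ T) ≤ wsq w S + wsq w T := by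
  rw [wsq, ← union_sdiff_self_eq_union, sum_union disjoint_sdiff]
  exact add_le_add_right (wsq_mono w sdiff_subset) _

lemma wsq_biUnion_le {ι : Type*} (w : V → ℝ) (s : Finset ι) (f : ι → Finset V) :
    wsq w (s.biUnion f) ≤ ∑ i ∈ s, wsq w (f i) := by
  induction s using Finset.induction with
  | empty => simp [wsq]
  | insert a s ha ih =>
    rw [biUnion_insert, sum_insert ha]
    linarith [wsq_union_le w (f a) (s.biUnion f)]

lemma wsq_le_mul_wsum {S : Finset V} {m : ℝ} (h : ∀ x ∈ S, 0 ≤ w x ∧ w x ≤ m) :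
    wsq w S ≤ m * wsum w S := by
  rw [wsq, wsum, mul_sum]
  exact sum_le_sum fun x hx => by nlinarith [h x hx]

lemma wsq_lt_sq_of_wsum_lt {S : Finset V} {a : ℝ} (hw : ∀ x ∈ S, 0 ≤ w x) (h : wsum w S < a) :
    wsq w S < a ^ 2 := by
  have hS : 0 ≤ wsum w S := sum_nonneg hw
  calc wsq w S ≤ wsum w S ^ 2 := sum_sq_le_sq_sum_of_nonneg hw
    _ < a ^ 2 := by nlinarith

lemma IsSingle.wsq_nbhd1_le {A : Finset V} {s v : V} (hs : IsSingle G w A s v)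
    (hw : ∀ x, 0 ≤ w x) (hmax : ∀ x ∈ nbhd1 G s A, w x ≤ w v) :
    wsq w (nbhd1 G s A) ≤ (1 + 1 / 2304) * w v ^ 2 :=
  calc wsq w (nbhd1 G s A) ≤ w v * wsum w (nbhd1 G s A) :=
        wsq_le_mul_wsum fun x hx => ⟨hw x, hmax x hx⟩
    _ ≤ w v * ((1 + 1 / 2304) * w v) := mul_le_mul_of_nonneg_left hs.2.2 (hw v)
    _ = (1 + 1 / 2304) * w v ^ 2 := by ring

lemma IsSingle.sq_le {A : Finset V} {s v : V} (hs : IsSingle G w A s v) (hv : 0 < w v) :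
    (1 - 1 / 2304) ^ 2 * w v ^ 2 ≤ w s ^ 2 := by
  have h : (1 - 1 / 2304) * w v ≤ w s := (le_div_iff₀ hv).mp hs.1
  rw [← mul_pow]
  exact pow_le_pow_left₀ (by positivity) h 2

theorem localImprovement_insert_image_singles {d : ℕ} (hd : 3 ≤ d) (hG : ClawFree G d)
    (hw : ∀ x, 0 < w x) {A : Finset V} (hA : IsIndep G A) {u : V} {t : V → V}
    (hX : IsIndep G (insert u ((nbhd1 G u A).image t)))
    (hu : u ∉ (nbhd1 G u A).image t) (hinj : Set.InjOn t (nbhd1 G u A))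
    (hlight : wsum w (nbhd1 G u A) < 3 * w u)
    (hsingle : ∀ v ∈ nbhd1 G u A, IsSingle G w A (t v) v ∧ v ∈ nbhd1 G (t v) A ∧
      ∀ x ∈ nbhd1 G (t v) A, w x ≤ w v) :
    LocalImprovement G d w A (insert u ((nbhd1 G u A).image t)) := by
  set N := nbhd1 G u A
  set S := wsq w N
  refine ⟨hX, ?_, ?_⟩
  · have hN : N.card ≤ d := by
      have h₁ : (N.erase u).card ≤ d - 1 := card_erase_nbhd1_le hG hA u
      have h₂ := pred_card_le_card_erase (s := N) (a := u)
      omega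
    have := card_insert_le u (N.image t)
    have := card_image_le (s := N) (f := t)
    obtain ⟨m, rfl⟩ : ∃ m, d = m + 3 := ⟨d - 3, by omega⟩
    rw [show m + 3 - 1 = m + 2 by rfl]
    nlinarith
  have hcover : nbhd G (insert u (N.image t)) A ⊆ N.biUnion fun v => nbhd1 G (t v) A := by
    rw [nbhd_eq_biUnion, biUnion_insert, image_biUnion]
    refine union_subset (fun v hv => mem_biUnion.mpr ⟨v, hv, (hsingle v hv).2.1⟩) subset_rfl
  have hupper : wsq w (nbhd G (insert u (N.image t)) A) ≤ (1 + 1 / 2304) * S :=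
    calc wsq w (nbhd G (insert u (N.image t)) A)
        ≤ ∑ v ∈ N, wsq w (nbhd1 G (t v) A) := (wsq_mono w hcover).trans (wsq_biUnion_le w N _)
      _ ≤ ∑ v ∈ N, (1 + 1 / 2304) * w v ^ 2 := sum_le_sum fun v hv =>
          (hsingle v hv).1.wsq_nbhd1_le (fun x => (hw x).le) (hsingle v hv).2.2
      _ = (1 + 1 / 2304) * S := by rw [← mul_sum]; rfl
  have hlower : w u ^ 2 + (1 - 1 / 2304) ^ 2 * S ≤ wsq w (insert u (N.image t)) := by
    rw [wsq, sum_insert hu, sum_image hinj]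
    gcongr
    simp only [S, wsq, mul_sum]
    exact sum_le_sum fun v hv => (hsingle v hv).1.sq_le (hw v)
  have hS : S < (3 * w u) ^ 2 := wsq_lt_sq_of_wsum_lt (fun x _ => (hw x).le) hlight
  have hS0 : 0 ≤ S := sum_nonneg fun _ _ => sq_nonneg _
  nlinarith

end

theorem stmt17_general (G : SimpleGraph V) (d : ℕ) (hd : 3 ≤ d) (hG : ClawFree G d)
    (w : V → ℝ) (hw : ∀ v, 0 < w v) (Astar A : Finset V)
    (hAstarIndep : IsIndep G Astar)
    (hAIndep : IsIndep G A)
    (n : V → V)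
    (hn : ∀ u ∈ Astar, n u ∈ nbhd1 G u A ∧ ∀ x ∈ nbhd1 G u A, w x ≤ w (n u))
    (B : Finset V) (t : V → V)
    (ht : ∀ v ∈ B, t v ∈ Astar ∧ 0 < charge G w A n (t v) v ∧ IsSingle G w A (t v) v
        ∧ ∀ u ∈ Astar, 0 < charge G w A n u v → IsSingle G w A u v → u = t v)
    (u : V)
    (hu : u ∈ Astar \ (B.image t
        ∪ Astar.filter (fun x => 3 * w x ≤ wsum w (nbhd1 G x A))))
    (hempty : nbhd1 G u (A \ B) = ∅) :
    ∃ X : Finset V, LocalImprovement G d w A X := by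
  obtain ⟨huAstar, hu⟩ := mem_sdiff.mp hu
  rw [mem_union, not_or, mem_filter, not_and, not_le] at hu
  have hNB : nbhd1 G u A ⊆ B := fun v hv => by
    by_contra hvB
    refine (eq_empty_iff_forall_notMem.mp hempty) v (mem_nbhd1.mpr ⟨?_, (mem_nbhd1.mp hv).2⟩)
    exact mem_sdiff.mpr ⟨(mem_nbhd1.mp hv).1, hvB⟩
  have hpartner : ∀ v ∈ nbhd1 G u A, t v ∈ Astar ∧ n (t v) = v ∧ IsSingle G w A (t v) v :=
    fun v hv => by
      obtain ⟨htv, hcharge, hsingle, -⟩ := ht v (hNB hv)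
      exact ⟨htv, (eq_of_charge_pos hcharge).symm, hsingle⟩
  refine ⟨_, localImprovement_insert_image_singles hd hG hw hAIndep (hAstarIndep.subset ?_)
    (fun h => hu.1 (image_subset_image hNB h)) (fun v hv v' hv' h => ?_) (hu.2 huAstar)
    (fun v hv => ?_)⟩
  · exact insert_subset huAstar (image_subset_iff.mpr fun v hv => (hpartner v hv).1)
  · rw [← (hpartner v hv).2.1, ← (hpartner v' hv').2.1, h]
  · obtain ⟨htv, hnt, hsingle⟩ := hpartner v hv
    obtain ⟨hmem, hmax⟩ := hn (t v) htv
    rw [hnt] at hmem hmax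
    exact ⟨hsingle, hmem, hmax⟩

theorem stmt17 [Fintype V] (G : SimpleGraph V) (d : ℕ) (hd : 3 ≤ d) (hG : ClawFree G d)
    (w : V → ℝ) (hw : ∀ v, 0 < w v) (Astar A : Finset V)
    (hAstarIndep : IsIndep G Astar)
    (hAstarMax : ∀ S : Finset V, IsIndep G S → wsum w S ≤ wsum w Astar)
    (hAIndep : IsIndep G A) (hAmax : ∀ v : V, (nbhd1 G v A).Nonempty)
    (n : V → V)
    (hn : ∀ u ∈ Astar, n u ∈ nbhd1 G u A ∧ ∀ x ∈ nbhd1 G u A, w x ≤ w (n u))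
    (B : Finset V) (hBsub : B ⊆ A) (t : V → V)
    (ht : ∀ v ∈ B, t v ∈ Astar ∧ 0 < charge G w A n (t v) v ∧ IsSingle G w A (t v) v
        ∧ ∀ u ∈ Astar, 0 < charge G w A n u v → IsSingle G w A u v → u = t v)
    (u : V)
    (hu : u ∈ Astar \ (B.image t
        ∪ Astar.filter (fun x => 3 * w x ≤ wsum w (nbhd1 G x A))))
    (hempty : nbhd1 G u (A \ B) = ∅) :
    ∃ X : Finset V, LocalImprovement G d w A X :=
  stmt17_general G d hd hG w hw Astar A hAstarIndep hAIndep n hn B t ht u hu hempty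

end
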